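/- Assume μ1, μ2, σ1, σ2 > 0 and ρ ∈ (−1,1), with ρ·μ2/σ2 ≠ μ1/σ1. Define a1 := (ρμ2/σ2 − μ1/σ1)·(σ2/σ1)/(1−ρ²), b1 := −μ2/σ2, a2² := (σ2/σ1)²/(1−ρ²), ω₀ := (ρμ2/σ2 − μ1/σ1)/√(2(1−ρ²)), A(x) := 1/σ2² + (x − ρσ1/σ2)²/(σ1²(1−ρ²)), B(x) := −μ2/σ2² + (x − ρσ1/σ2)(μ2ρσ1/σ2 − μ1)/(σ1²(1−ρ²)), and ω(x) := B(x)/√(2A(x)). Set x₀ := 2σ1/σ2. Then for every x ≥ 2x₀: |ω(x) − ω₀| ≤ |ω₀|·( |b1/a1|/x₀ + 1/(2·a2²·x₀²) + 1/(8·a2⁴·x₀⁴) ). -/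

import Mathlib

/-!
In the variable `t = x - ρσ₁/σ₂` one has `ω(x) = (a₁t + b₁)/√(2 + c²t²)` with `c² = 2a₂²`, and
`ω₀ = a₁/c`. The difference is `b₁/S + a₁(t/S - 1/c)` with `S = √(2 + c²t²) ≥ ct`; the first
term is at most `|b₁|/(ct)`, and `S - ct ≤ 1/(ct)` bounds the second by `|a₁|/(c³t²)`. Since
`t ≥ x₀` for `x ≥ 2x₀`, this gives the first two terms of the bound; the third is slack.
-/

open Real Set

/-- The coefficient `A(x)`. -/
noncomputable def coefA (σ1 σ2 ρ : ℝ) (x : ℝ) : ℝ :=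
  1 / σ2 ^ 2 + (x - ρ * σ1 / σ2) ^ 2 / (σ1 ^ 2 * (1 - ρ ^ 2))

/-- The coefficient `B(x)`. -/
noncomputable def coefB (μ1 μ2 σ1 σ2 ρ : ℝ) (x : ℝ) : ℝ :=
  -μ2 / σ2 ^ 2 + (x - ρ * σ1 / σ2) * (μ2 * ρ * σ1 / σ2 - μ1) / (σ1 ^ 2 * (1 - ρ ^ 2))

/-- `ω(x) = B(x)/√(2A(x))`. -/
noncomputable def omegaFun (μ1 μ2 σ1 σ2 ρ : ℝ) (x : ℝ) : ℝ :=
  coefB μ1 μ2 σ1 σ2 ρ x / Real.sqrt (2 * coefA σ1 σ2 ρ x)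

lemma sqrt_add_sq_sub_le {k u : ℝ} (hk : 0 ≤ k) (hu : 0 < u) :
    √(k + u ^ 2) - u ≤ k / (2 * u) := by
  rw [sub_le_iff_le_add, sqrt_le_left (by positivity)]
  have : (k / (2 * u) + u) ^ 2 = k + u ^ 2 + (k / (2 * u)) ^ 2 := by field_simp; ring
  nlinarith [sq_nonneg (k / (2 * u))]

lemma abs_div_sqrt_sub_inv_le {k c t : ℝ} (hk : 0 ≤ k) (hc : 0 < c) (ht : 0 < t) :
    |t / √(k + (c * t) ^ 2) - 1 / c| ≤ k / (2 * c ^ 3 * t ^ 2) := by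
  have hct : 0 < c * t := by positivity
  set S := √(k + (c * t) ^ 2)
  have hS : c * t ≤ S := le_sqrt_of_sq_le (by linarith)
  have hSpos : 0 < S := hct.trans_le hS
  have hsplit : t / S - 1 / c = -((S - c * t) / (c * S)) := by field_simp; ring
  rw [hsplit, abs_neg, abs_of_nonneg (by apply div_nonneg <;> [linarith; positivity])]
  calc (S - c * t) / (c * S) ≤ k / (2 * (c * t)) / (c * (c * t)) := by
        gcongr
        exact sqrt_add_sq_sub_le hk hct
    _ = k / (2 * c ^ 3 * t ^ 2) := by field_simp

lemma abs_affine_div_sqrt_sub_le {a b k c x₀ t : ℝ} (ha : a ≠ 0) (hk : 0 ≤ k) (hc : 0 < c)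
    (hx₀ : 0 < x₀) (ht : x₀ ≤ t) :
    |(a * t + b) / √(k + (c * t) ^ 2) - a / c| ≤
      |a / c| * (|b / a| / x₀ + k / (2 * c ^ 2 * x₀ ^ 2)) := by
  have ht0 : 0 < t := hx₀.trans_le ht
  set S := √(k + (c * t) ^ 2)
  have hS : c * t ≤ S := le_sqrt_of_sq_le (by linarith)
  have hSpos : 0 < S := (by positivity : 0 < c * t).trans_le hS
  have hsplit : (a * t + b) / S - a / c = b / S + a * (t / S - 1 / c) := by field_simp; ring
  calc |(a * t + b) / S - a / c| ≤ |b| / S + |a| * (k / (2 * c ^ 3 * t ^ 2)) := by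
        rw [hsplit]
        refine (abs_add_le _ _).trans (add_le_add ?_ ?_)
        · rw [abs_div, abs_of_pos hSpos]
        · rw [abs_mul]
          exact mul_le_mul_of_nonneg_left (abs_div_sqrt_sub_inv_le hk hc ht0) (abs_nonneg a)
    _ ≤ |b| / (c * x₀) + |a| * (k / (2 * c ^ 3 * x₀ ^ 2)) := by
        gcongr
        exact (mul_le_mul_of_nonneg_left ht hc.le).trans hS
    _ = |a / c| * (|b / a| / x₀ + k / (2 * c ^ 2 * x₀ ^ 2)) := by
        have := abs_pos.2 ha
        rw [abs_div, abs_div, abs_of_pos hc]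
        field_simp

lemma omegaFun_eq {μ1 μ2 σ1 σ2 ρ c : ℝ} (hσ1 : 0 < σ1) (hσ2 : 0 < σ2) (hρ : 0 < 1 - ρ ^ 2)
    (hc : c ^ 2 = 2 * ((σ2 / σ1) ^ 2 / (1 - ρ ^ 2))) (x : ℝ) :
    omegaFun μ1 μ2 σ1 σ2 ρ x =
      ((ρ * μ2 / σ2 - μ1 / σ1) * (σ2 / σ1) / (1 - ρ ^ 2) * (x - ρ * σ1 / σ2) + -μ2 / σ2) /
        √(2 + (c * (x - ρ * σ1 / σ2)) ^ 2) := by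
  have hA : 2 * coefA σ1 σ2 ρ x = (2 + (c * (x - ρ * σ1 / σ2)) ^ 2) / σ2 ^ 2 := by
    rw [coefA, mul_pow, hc]
    field_simp
  rw [omegaFun, hA, sqrt_div' _ (sq_nonneg σ2), sqrt_sq hσ2.le, div_div_eq_mul_div, coefB]
  congr 1
  field_simp
  ring

lemma div_sqrt_two_mul_eq {d u v : ℝ} (hu : 0 < u) (hv : 0 < v) :
    d / √(2 * v) = d * u / v / √(2 * (u ^ 2 / v)) := by
  rw [show 2 * (u ^ 2 / v) = (u / v) ^ 2 * (2 * v) by field_simp, sqrt_mul (sq_nonneg _),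
    sqrt_sq (by positivity)]
  field_simp

theorem omega_minus_omega0_bound_general
    (μ1 μ2 σ1 σ2 ρ : ℝ) (hσ1 : 0 < σ1) (hσ2 : 0 < σ2)
    (hρ : ρ ∈ Set.Ioo (-1 : ℝ) 1) (hne : ρ * μ2 / σ2 ≠ μ1 / σ1) :
    ∀ x : ℝ, 2 * (2 * σ1 / σ2) ≤ x →
      |omegaFun μ1 μ2 σ1 σ2 ρ x -
          (ρ * μ2 / σ2 - μ1 / σ1) / Real.sqrt (2 * (1 - ρ ^ 2))| ≤
        |(ρ * μ2 / σ2 - μ1 / σ1) / Real.sqrt (2 * (1 - ρ ^ 2))| *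
          (|(-μ2 / σ2) / ((ρ * μ2 / σ2 - μ1 / σ1) * (σ2 / σ1) / (1 - ρ ^ 2))| /
              (2 * σ1 / σ2) +
            1 / (2 * ((σ2 / σ1) ^ 2 / (1 - ρ ^ 2)) * (2 * σ1 / σ2) ^ 2) +
            1 / (8 * ((σ2 / σ1) ^ 2 / (1 - ρ ^ 2)) ^ 2 * (2 * σ1 / σ2) ^ 4)) := by
  intro x hx
  have hρ2 : 0 < 1 - ρ ^ 2 := by nlinarith [hρ.1, hρ.2]
  set c := √(2 * ((σ2 / σ1) ^ 2 / (1 - ρ ^ 2)))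
  have hc : c ^ 2 = 2 * ((σ2 / σ1) ^ 2 / (1 - ρ ^ 2)) := sq_sqrt (by positivity)
  have ha : (ρ * μ2 / σ2 - μ1 / σ1) * (σ2 / σ1) / (1 - ρ ^ 2) ≠ 0 := by
    have := sub_ne_zero.2 hne
    positivity
  have ht : 2 * σ1 / σ2 ≤ x - ρ * σ1 / σ2 := by
    have : ρ * σ1 / σ2 ≤ σ1 / σ2 := by gcongr; exact mul_le_of_le_one_left hσ1.le hρ.2.le
    linarith [show 2 * σ1 / σ2 = 2 * (σ1 / σ2) by ring, div_pos hσ1 hσ2]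
  rw [omegaFun_eq hσ1 hσ2 hρ2 hc, div_sqrt_two_mul_eq (u := σ2 / σ1) (by positivity) hρ2]
  refine (abs_affine_div_sqrt_sub_le ha zero_le_two (sqrt_pos.2 (by positivity))
    (by positivity) ht).trans ?_
  rw [hc, show (2 : ℝ) / (2 * (2 * ((σ2 / σ1) ^ 2 / (1 - ρ ^ 2))) * (2 * σ1 / σ2) ^ 2) =
    1 / (2 * ((σ2 / σ1) ^ 2 / (1 - ρ ^ 2)) * (2 * σ1 / σ2) ^ 2) by ring]
  exact mul_le_mul_of_nonneg_left (le_add_of_nonneg_right (by positivity)) (abs_nonneg _)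

theorem omega_minus_omega0_bound
    (μ1 μ2 σ1 σ2 ρ : ℝ) (hμ1 : 0 < μ1) (hμ2 : 0 < μ2) (hσ1 : 0 < σ1) (hσ2 : 0 < σ2)
    (hρ : ρ ∈ Set.Ioo (-1 : ℝ) 1) (hne : ρ * μ2 / σ2 ≠ μ1 / σ1) :
    ∀ x : ℝ, 2 * (2 * σ1 / σ2) ≤ x →
      |omegaFun μ1 μ2 σ1 σ2 ρ x -
          (ρ * μ2 / σ2 - μ1 / σ1) / Real.sqrt (2 * (1 - ρ ^ 2))| ≤
        |(ρ * μ2 / σ2 - μ1 / σ1) / Real.sqrt (2 * (1 - ρ ^ 2))| *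
          (|(-μ2 / σ2) / ((ρ * μ2 / σ2 - μ1 / σ1) * (σ2 / σ1) / (1 - ρ ^ 2))| /
              (2 * σ1 / σ2) +
            1 / (2 * ((σ2 / σ1) ^ 2 / (1 - ρ ^ 2)) * (2 * σ1 / σ2) ^ 2) +
            1 / (8 * ((σ2 / σ1) ^ 2 / (1 - ρ ^ 2)) ^ 2 * (2 * σ1 / σ2) ^ 4)) :=
  omega_minus_omega0_bound_general μ1 μ2 σ1 σ2 ρ hσ1 hσ2 hρ hne
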